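/- arXiv:2510.07756 — 3 statements merged into one kernel-verified Lean document; each statement's English description precedes it below -/
import Mathlib

section
/- Optimal control-variate coefficient (Theorem 2): for integers 1 ≤ K ≤ M ≤ N, the coefficient a* = ρ σ_Y / σ_X minimizes the variance of the two-level estimator, i.e. for every a ∈ ℝ, Var(Ȳ_K + a* (X̄_N − X̄_M)) ≤ Var(Ȳ_K + a (X̄_N − X̄_M)). -/
open MeasureTheory ProbabilityTheory Finset

/-- Sample mean of the first `n` samples of the sequence `X`. -/
noncomputable def sampleMean {Ω : Type} (n : ℕ) (X : ℕ → Ω → ℝ) : Ω → ℝ :=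
  fun ω => (n : ℝ)⁻¹ * ∑ j ∈ Finset.range n, X j ω

/-- Covariance of two real random variables. -/
noncomputable def covar {Ω : Type} [MeasurableSpace Ω] (μ : Measure Ω) (X Y : Ω → ℝ) : ℝ :=
  ∫ ω, (X ω - μ[X]) * (Y ω - μ[Y]) ∂μ

/-! Expanding by bilinearity, the variance of `Ȳ_K + a (X̄_N − X̄_M)` is a quadratic in `a`.
Independence kills every off-diagonal covariance, and because the sample means are nested,
`Cov(Ȳ_K, X̄_N) = c / N` and `Cov(X̄_M, X̄_N) = σ_X² / N` for `K ≤ N`, `M ≤ N`. Hence the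
variance is `σ_Y² / K + (1/M − 1/N) (a² σ_X² − 2 a c)`, and since `1/M − 1/N ≥ 0` it is
minimised at the vertex `a = c / σ_X² = ρ σ_Y / σ_X`. -/

section Covariance

variable {Ω : Type*} [MeasurableSpace Ω] {μ : Measure Ω}

lemma ProbabilityTheory.IdentDistrib.covariance_comp_eq {Ω' E : Type*} [MeasurableSpace Ω']
    [MeasurableSpace E] {ν : Measure Ω'} {Z : Ω → E} {Z' : Ω' → E} (h : IdentDistrib Z Z' μ ν)
    {f g : E → ℝ} (hf : Measurable f) (hg : Measurable g) :
    cov[fun ω => f (Z ω), fun ω => g (Z ω); μ] = cov[fun ω => f (Z' ω), fun ω => g (Z' ω); ν] := by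
  rw [← covariance_map_fun hf.aestronglyMeasurable hg.aestronglyMeasurable h.aemeasurable_fst,
    h.map_eq, covariance_map_fun hf.aestronglyMeasurable hg.aestronglyMeasurable
      h.aemeasurable_snd]

lemma covariance_comp_of_iIndepFun_of_identDistrib {E : Type*} [MeasurableSpace E]
    {W : ℕ → Ω → E} (hindep : iIndepFun W μ) (hident : ∀ j, IdentDistrib (W j) (W 0) μ μ)
    {f g : E → ℝ} (hf : Measurable f) (hg : Measurable g)
    (hfL2 : ∀ j, MemLp (fun ω => f (W j ω)) 2 μ) (hgL2 : ∀ j, MemLp (fun ω => g (W j ω)) 2 μ)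
    (i j : ℕ) :
    cov[fun ω => f (W i ω), fun ω => g (W j ω); μ]
      = if i = j then cov[fun ω => f (W 0 ω), fun ω => g (W 0 ω); μ] else 0 := by
  split_ifs with hij
  · subst hij
    exact (hident i).covariance_comp_eq hf hg
  · exact ((hindep.indepFun hij).comp hf hg).covariance_eq_zero (hfL2 i) (hgL2 j)

lemma covariance_sum_range_sum_range [IsFiniteMeasure μ] {X Y : ℕ → Ω → ℝ}
    (hX : ∀ i, MemLp (X i) 2 μ) (hY : ∀ j, MemLp (Y j) 2 μ) {c : ℝ}
    (hcov : ∀ i j, cov[X i, Y j; μ] = if i = j then c else 0) (K N : ℕ) :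
    cov[fun ω => ∑ i ∈ range K, X i ω, fun ω => ∑ j ∈ range N, Y j ω; μ] = min K N * c := by
  simp_rw [covariance_fun_sum_fun_sum' (fun i _ => hX i) (fun j _ => hY j), hcov,
    Finset.sum_ite_eq, ← Finset.sum_filter, Finset.filter_mem_eq_inter, range_inter_range,
    sum_const, card_range, nsmul_eq_mul]

lemma variance_add_const_mul [IsFiniteMeasure μ] {U V : Ω → ℝ} (hU : MemLp U 2 μ)
    (hV : MemLp V 2 μ) (t : ℝ) :
    Var[fun ω => U ω + t * V ω; μ] = Var[U; μ] + 2 * t * cov[U, V; μ] + t ^ 2 * Var[V; μ] := by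
  rw [variance_fun_add hU (hV.const_mul t), covariance_const_mul_right, variance_const_mul]
  ring

end Covariance

section SampleMean

variable {Ω : Type} [MeasurableSpace Ω] {μ : Measure Ω}

lemma covar_eq_covariance (μ : Measure Ω) (X Y : Ω → ℝ) : covar μ X Y = cov[X, Y; μ] := rfl

lemma memLp_sampleMean {X : ℕ → Ω → ℝ} {p : ENNReal} (hX : ∀ i, MemLp (X i) p μ) (n : ℕ) :
    MemLp (sampleMean n X) p μ :=
  (memLp_finsetSum _ fun i _ => hX i).const_mul _

lemma covariance_sampleMean_sampleMean [IsFiniteMeasure μ] {X Y : ℕ → Ω → ℝ}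
    (hX : ∀ i, MemLp (X i) 2 μ) (hY : ∀ j, MemLp (Y j) 2 μ) {c : ℝ}
    (hcov : ∀ i j, cov[X i, Y j; μ] = if i = j then c else 0) {K N : ℕ}
    (hK : 0 < K) (hN : 0 < N) :
    cov[sampleMean K X, sampleMean N Y; μ] = c / max K N := by
  unfold sampleMean
  rw [covariance_const_mul_left, covariance_const_mul_right,
    covariance_sum_range_sum_range hX hY hcov]
  have hminmax : ((min K N : ℕ) : ℝ) * (max K N : ℕ) = K * N := by
    exact_mod_cast min_mul_max K N
  field_simp
  linear_combination c * hminmax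

lemma variance_sampleMean_add_mul_sub_sampleMean [IsFiniteMeasure μ] {X Y : ℕ → Ω → ℝ}
    (hX : ∀ i, MemLp (X i) 2 μ) (hY : ∀ j, MemLp (Y j) 2 μ) {vX vY c : ℝ}
    (hXX : ∀ i j, cov[X i, X j; μ] = if i = j then vX else 0)
    (hYY : ∀ i j, cov[Y i, Y j; μ] = if i = j then vY else 0)
    (hXY : ∀ i j, cov[X i, Y j; μ] = if i = j then c else 0)
    {K M N : ℕ} (hK : 0 < K) (hKM : K ≤ M) (hMN : M ≤ N) (t : ℝ) :
    Var[fun ω => sampleMean K Y ω + t * (sampleMean N X ω - sampleMean M X ω); μ]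
      = vY / K + ((M : ℝ)⁻¹ - (N : ℝ)⁻¹) * (t ^ 2 * vX - 2 * t * c) := by
  have hM : 0 < M := hK.trans_le hKM
  have hN : 0 < N := hM.trans_le hMN
  have hYK := memLp_sampleMean hY K
  have hXM := memLp_sampleMean hX M
  have hXN := memLp_sampleMean hX N
  have hD : MemLp (fun ω => sampleMean N X ω - sampleMean M X ω) 2 μ := hXN.sub hXM
  rw [variance_add_const_mul hYK hD, ← covariance_self hYK.aemeasurable,
    ← covariance_self hD.aemeasurable,
    covariance_comm _ (fun ω => sampleMean N X ω - sampleMean M X ω),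
    covariance_fun_sub_left hXN hXM hYK, covariance_fun_sub_fun_sub hXN hXM hXN hXM,
    covariance_sampleMean_sampleMean hY hY hYY hK hK,
    covariance_sampleMean_sampleMean hX hY hXY hN hK,
    covariance_sampleMean_sampleMean hX hY hXY hM hK,
    covariance_sampleMean_sampleMean hX hX hXX hN hN,
    covariance_sampleMean_sampleMean hX hX hXX hN hM,
    covariance_sampleMean_sampleMean hX hX hXX hM hN,
    covariance_sampleMean_sampleMean hX hX hXX hM hM,
    max_self, max_self, max_self, max_eq_left (hKM.trans hMN), max_eq_left hKM, max_eq_left hMN,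
    max_eq_right hMN]
  ring

lemma le_sq_mul_sub_two_mul_mul {v : ℝ} (hv : 0 < v) (c a : ℝ) :
    (c / v) ^ 2 * v - 2 * (c / v) * c ≤ a ^ 2 * v - 2 * a * c := by
  have hgap : a ^ 2 * v - 2 * a * c - ((c / v) ^ 2 * v - 2 * (c / v) * c)
      = (a * v - c) ^ 2 / v := by
    field_simp
    ring
  have hgap_nonneg : 0 ≤ (a * v - c) ^ 2 / v := by positivity
  linarith

end SampleMean

theorem stmt_6_general
    {Ω : Type} [MeasurableSpace Ω] (μ : Measure Ω) [IsProbabilityMeasure μ]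
    (W : ℕ → Ω → ℝ × ℝ)
    (hindep : iIndepFun W μ)
    (hident : ∀ j, IdentDistrib (W j) (W 0) μ μ)
    (hL2X : ∀ j, MemLp (fun ω => (W j ω).1) 2 μ)
    (hL2Y : ∀ j, MemLp (fun ω => (W j ω).2) 2 μ)
    (σX σY c ρ : ℝ)
    (hσX : σX = Real.sqrt (variance (fun ω => (W 0 ω).1) μ)) (hσXpos : 0 < σX)
    (hσYpos : 0 < σY)
    (hc : c = covar μ (fun ω => (W 0 ω).1) (fun ω => (W 0 ω).2))
    (hρ : ρ = c / (σX * σY))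
    (K M N : ℕ) (hK : 1 ≤ K) (hKM : K ≤ M) (hMN : M ≤ N) (a : ℝ) :
    variance (fun ω => sampleMean K (fun j ω' => (W j ω').2) ω
        + (ρ * σY / σX) * (sampleMean N (fun j ω' => (W j ω').1) ω
          - sampleMean M (fun j ω' => (W j ω').1) ω)) μ
      ≤ variance (fun ω => sampleMean K (fun j ω' => (W j ω').2) ω
        + a * (sampleMean N (fun j ω' => (W j ω').1) ω
          - sampleMean M (fun j ω' => (W j ω').1) ω)) μ := by
  have hXX := covariance_comp_of_iIndepFun_of_identDistrib hindep hident measurable_fst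
    measurable_fst hL2X hL2X
  have hYY := covariance_comp_of_iIndepFun_of_identDistrib hindep hident measurable_snd
    measurable_snd hL2Y hL2Y
  have hXY := covariance_comp_of_iIndepFun_of_identDistrib hindep hident measurable_fst
    measurable_snd hL2X hL2Y
  rw [covar_eq_covariance] at hc
  rw [variance_sampleMean_add_mul_sub_sampleMean hL2X hL2Y hXX hYY hXY hK hKM hMN,
    variance_sampleMean_add_mul_sub_sampleMean hL2X hL2Y hXX hYY hXY hK hKM hMN,
    covariance_self (hL2X 0).aemeasurable, ← Real.sq_sqrt (variance_nonneg _ _), ← hσX, ← hc]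
  have hcoef : ρ * σY / σX = c / σX ^ 2 := by
    rw [hρ]
    field_simp
  have hδ : 0 ≤ (M : ℝ)⁻¹ - (N : ℝ)⁻¹ :=
    sub_nonneg.2 (inv_anti₀ (by exact_mod_cast hK.trans hKM) (by exact_mod_cast hMN))
  rw [hcoef]
  exact add_le_add_right (mul_le_mul_of_nonneg_left
    (le_sq_mul_sub_two_mul_mul (pow_pos hσXpos 2) c a) hδ) _

/-- optimal control-variate coefficient.  For `1 ≤ K ≤ M ≤ N`, the
coefficient `a* = ρ σ_Y / σ_X` minimizes the variance of the two-level estimator: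
for every `a ∈ ℝ`, `Var(Ȳ_K + a* (X̄_N − X̄_M)) ≤ Var(Ȳ_K + a (X̄_N − X̄_M))`. -/
theorem stmt_6
    {Ω : Type} [MeasurableSpace Ω] (μ : Measure Ω) [IsProbabilityMeasure μ]
    (W : ℕ → Ω → ℝ × ℝ)
    (hmeas : ∀ j, Measurable (W j))
    (hindep : iIndepFun W μ)
    (hident : ∀ j, IdentDistrib (W j) (W 0) μ μ)
    (hL2X : ∀ j, MemLp (fun ω => (W j ω).1) 2 μ)
    (hL2Y : ∀ j, MemLp (fun ω => (W j ω).2) 2 μ)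
    (σX σY c ρ : ℝ)
    (hσX : σX = Real.sqrt (variance (fun ω => (W 0 ω).1) μ)) (hσXpos : 0 < σX)
    (hσY : σY = Real.sqrt (variance (fun ω => (W 0 ω).2) μ)) (hσYpos : 0 < σY)
    (hc : c = covar μ (fun ω => (W 0 ω).1) (fun ω => (W 0 ω).2))
    (hρ : ρ = c / (σX * σY))
    (K M N : ℕ) (hK : 1 ≤ K) (hKM : K ≤ M) (hMN : M ≤ N) (a : ℝ) :
    variance (fun ω => sampleMean K (fun j ω' => (W j ω').2) ω
        + (ρ * σY / σX) * (sampleMean N (fun j ω' => (W j ω').1) ω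
          - sampleMean M (fun j ω' => (W j ω').1) ω)) μ
      ≤ variance (fun ω => sampleMean K (fun j ω' => (W j ω').2) ω
        + a * (sampleMean N (fun j ω' => (W j ω').1) ω
          - sampleMean M (fun j ω' => (W j ω').1) ω)) μ :=
  stmt_6_general μ W hindep hident hL2X hL2Y σX σY c ρ hσX hσXpos hσYpos hc hρ K M N hK hKM hMN a
end

section
/- Uncoupled MLMF variance (Theorem 3, independent case): Var(Y_ind) = σ_L² Σ_{l=1}^{L} (ρ_{l,L}² + ρ_{l−1,L}²)/N_l. -/
/-!
Spread the estimator out over the `2L − 1` sample families: it is a sum of `c_f` times the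
sample mean of family `f`, and, after opening the sample means, a linear combination of the
pairwise independent samples `W (f, j)`. Its variance is therefore `∑_f c_f² σ_f² / n_f`.
With `c_f = ±a_l*` and `σ_f = σ_l` this is `σ_L² ρ_{l,L}² / N_l` for `A_l` and
`σ_L² ρ_{l,L}² / N_{l+1}` for `B_l`, plus `σ_L² / N_L` for `P`; shifting the index of the
`B_l` terms by one and using `ρ_{0,L} = 0`, `ρ_{L,L} = 1` gives the stated sum.
-/

open MeasureTheory ProbabilityTheory Finset

section Variance

variable {Ω : Type} [MeasurableSpace Ω] {μ : Measure Ω}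

theorem variance_sum_const_mul {ι : Type*} {X : ι → Ω → ℝ} {s : Finset ι} (a : ι → ℝ)
    (hX : ∀ i ∈ s, MemLp (X i) 2 μ) (hindep : Set.Pairwise ↑s fun i j => X i ⟂ᵢ[μ] X j) :
    variance (fun ω => ∑ i ∈ s, a i * X i ω) μ = ∑ i ∈ s, a i ^ 2 * variance (X i) μ := by
  have hsum : (fun ω => ∑ i ∈ s, a i * X i ω) = ∑ i ∈ s, fun ω => a i * X i ω := by
    ext ω
    simp
  rw [hsum, IndepFun.variance_sum (fun i hi => (hX i hi).const_mul (a i))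
    fun i hi j hj hij => (hindep hi hj hij).comp (measurable_const_mul _) (measurable_const_mul _)]
  simp only [variance_const_mul]

/-- This also holds when `n f = 0`: an empty sample mean is `0`, and so is `c ^ 2 * v / 0`. -/
theorem variance_sum_mul_sampleMean {ι : Type*} {W : ι × ℕ → Ω → ℝ}
    (hW : ∀ p, MemLp (W p) 2 μ) (hindep : Pairwise fun p q => W p ⟂ᵢ[μ] W q)
    {v : ι → ℝ} (hv : ∀ f j, variance (W (f, j)) μ = v f) (F : Finset ι) (c : ι → ℝ)
    (n : ι → ℕ) :
    variance (fun ω => ∑ f ∈ F, c f * sampleMean (n f) (fun j => W (f, j)) ω) μ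
      = ∑ f ∈ F, c f ^ 2 * v f / n f := by
  have hflat : (fun ω => ∑ f ∈ F, c f * sampleMean (n f) (fun j => W (f, j)) ω)
      = fun ω => ∑ p ∈ F.sigma fun f => range (n f), c p.1 / n p.1 * W (p.1, p.2) ω := by
    ext ω
    simp only [sum_sigma, sampleMean, mul_sum, div_eq_mul_inv, mul_assoc]
  have hpair : Set.Pairwise ↑(F.sigma fun f => range (n f))
      fun (p q : Σ _ : ι, ℕ) => W (p.1, p.2) ⟂ᵢ[μ] W (q.1, q.2) := by
    rintro ⟨f, j⟩ - ⟨g, k⟩ - hne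
    exact hindep fun h => hne (by simp_all)
  rw [hflat, variance_sum_const_mul _ (fun p _ => hW _) hpair, sum_sigma]
  refine sum_congr rfl fun f _ => ?_
  rcases eq_or_ne (n f : ℝ) 0 with hn | hn
  · simp [hn]
  · simp only [hv, sum_const, card_range, nsmul_eq_mul]
    field_simp

end Variance

theorem sum_Icc_add_pred {M : Type*} [AddCommMonoid M] (f g : ℕ → M) {L : ℕ} (hL : 1 ≤ L) :
    ∑ l ∈ Icc 1 L, (f l + g (l - 1)) = f L + g 0 + ∑ l ∈ Icc 1 (L - 1), (f l + g l) := by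
  obtain ⟨k, rfl⟩ := Nat.exists_eq_add_of_le' hL
  induction k with
  | zero => simp
  | succ k ih =>
    rw [sum_Icc_succ_top (by omega), ih (by omega), Nat.add_sub_cancel, Nat.add_sub_cancel,
      sum_Icc_succ_top (by omega)]
    abel

theorem sum_sq_add_sq_pred_div {ρ : ℕ → ℝ} {L : ℕ} (hL : 1 ≤ L) (hρ0 : ρ 0 = 0) (hρL : ρ L = 1)
    (N : ℕ → ℕ) :
    ∑ l ∈ Icc 1 L, (ρ l ^ 2 + ρ (l - 1) ^ 2) / N l
      = 1 / N L + ∑ l ∈ Icc 1 (L - 1), (ρ l ^ 2 / N l + ρ l ^ 2 / N (l + 1)) := calc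
  _ = ∑ l ∈ Icc 1 L, (ρ l ^ 2 / N l + ρ (l - 1) ^ 2 / N (l - 1 + 1)) :=
    sum_congr rfl fun l hl => by rw [Nat.sub_add_cancel (mem_Icc.1 hl).1, add_div]
  _ = _ := by simp [sum_Icc_add_pred _ (fun l => ρ l ^ 2 / N (l + 1)) hL, hρ0, hρL]

namespace MLMF

/-! Family `0` holds the samples of `P`, family `l` those of `A_l` and family `L + l` those
of `B_l`, for `1 ≤ l ≤ L - 1`; family `f` enters the estimator through `weight L a f` times
its sample mean over `size L N f` samples. -/

def families (L : ℕ) : Finset ℕ :=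
  insert 0 (Icc 1 (L - 1) ∪ (Icc 1 (L - 1)).image (L + ·))

noncomputable def weight (L : ℕ) (a : ℕ → ℝ) (f : ℕ) : ℝ :=
  if f = 0 then 1 else if f < L then a f else -a (f - L)

def size (L : ℕ) (N : ℕ → ℕ) (f : ℕ) : ℕ :=
  if f = 0 then N L else if f < L then N f else N (f - L + 1)

theorem sum_families {M : Type*} [AddCommMonoid M] (L : ℕ) (g : ℕ → M) :
    ∑ f ∈ families L, g f = g 0 + ∑ l ∈ Icc 1 (L - 1), (g l + g (L + l)) := by
  have hdisj : Disjoint (Icc 1 (L - 1)) ((Icc 1 (L - 1)).image (L + ·)) := by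
    simp only [disjoint_left, mem_Icc, mem_image]
    omega
  rw [families, sum_insert (by simp), sum_union hdisj, sum_image (by simp), sum_add_distrib]

theorem weight_zero (L : ℕ) (a : ℕ → ℝ) : weight L a 0 = 1 := if_pos rfl

theorem size_zero (L : ℕ) (N : ℕ → ℕ) : size L N 0 = N L := if_pos rfl

section Level

variable {L l : ℕ} (hl : l ∈ Icc 1 (L - 1))
include hl

theorem weight_of_mem (a : ℕ → ℝ) : weight L a l = a l := by
  rw [mem_Icc] at hl
  rw [weight, if_neg (by omega), if_pos (by omega)]

theorem weight_add_of_mem (a : ℕ → ℝ) : weight L a (L + l) = -a l := by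
  rw [mem_Icc] at hl
  rw [weight, if_neg (by omega), if_neg (by omega), Nat.add_sub_cancel_left]

theorem size_of_mem (N : ℕ → ℕ) : size L N l = N l := by
  rw [mem_Icc] at hl
  rw [size, if_neg (by omega), if_pos (by omega)]

theorem size_add_of_mem (N : ℕ → ℕ) : size L N (L + l) = N (l + 1) := by
  rw [mem_Icc] at hl
  rw [size, if_neg (by omega), if_neg (by omega), Nat.add_sub_cancel_left]

end Level

theorem estimator_eq_sum {Ω : Type} (L : ℕ) (a : ℕ → ℝ) (N : ℕ → ℕ) (W : ℕ × ℕ → Ω → ℝ) :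
    (fun ω => sampleMean (N L) (fun j ω' => W (0, j) ω') ω
        + ∑ l ∈ Icc 1 (L - 1), a l * (sampleMean (N l) (fun j ω' => W (l, j) ω') ω
          - sampleMean (N (l + 1)) (fun j ω' => W (L + l, j) ω') ω))
      = fun ω => ∑ f ∈ families L, weight L a f * sampleMean (size L N f) (fun j => W (f, j)) ω := by
  ext ω
  rw [sum_families, weight_zero, size_zero, one_mul]
  refine congrArg _ (sum_congr rfl fun l hl => ?_)
  rw [weight_of_mem hl, size_of_mem hl, weight_add_of_mem hl, size_add_of_mem hl]
  ring

end MLMF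

open MLMF in
theorem stmt_11_general
    {Ω : Type} [MeasurableSpace Ω] (μ : Measure Ω)
    (L : ℕ) (hL : 1 ≤ L)
    (σ ρ : ℕ → ℝ)
    (hσpos : ∀ l ∈ Finset.Icc 1 L, 0 < σ l)
    (hρ0 : ρ 0 = 0) (hρL : ρ L = 1)
    (N : ℕ → ℕ)
    (W : ℕ × ℕ → Ω → ℝ)
    (hindep : iIndepFun W μ)
    (hident : ∀ f j, IdentDistrib (W (f, j)) (W (f, 0)) μ μ)
    (hL2 : ∀ p, MemLp (W p) 2 μ)
    (hvarP : variance (W (0, 0)) μ = (σ L) ^ 2)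
    (hvarA : ∀ l ∈ Finset.Icc 1 (L - 1), variance (W (l, 0)) μ = (σ l) ^ 2)
    (hvarB : ∀ l ∈ Finset.Icc 1 (L - 1), variance (W (L + l, 0)) μ = (σ l) ^ 2) :
    variance (fun ω => sampleMean (N L) (fun j ω' => W (0, j) ω') ω
        + ∑ l ∈ Finset.Icc 1 (L - 1),
            (ρ l * σ L / σ l) * (sampleMean (N l) (fun j ω' => W (l, j) ω') ω
              - sampleMean (N (l + 1)) (fun j ω' => W (L + l, j) ω') ω)) μ
      = (σ L) ^ 2 * ∑ l ∈ Finset.Icc 1 L, ((ρ l) ^ 2 + (ρ (l - 1)) ^ 2) / N l := by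
  rw [estimator_eq_sum L (fun l => ρ l * σ L / σ l),
    variance_sum_mul_sampleMean hL2 (fun p q h => hindep.indepFun h)
      (fun f j => (hident f j).variance_eq),
    sum_families, sum_sq_add_sq_pred_div hL hρ0 hρL, mul_add, mul_sum, weight_zero, size_zero,
    hvarP]
  refine congrArg₂ _ (by ring) (sum_congr rfl fun l hl => ?_)
  have hσ : σ l ≠ 0 := (hσpos l (Icc_subset_Icc_right (Nat.sub_le L 1) hl)).ne'
  rw [weight_of_mem hl, size_of_mem hl, weight_add_of_mem hl, size_add_of_mem hl, hvarA l hl,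
    hvarB l hl]
  field_simp

/-- Theorem 3, independent/uncoupled case:
`Var(Y_ind) = σ_L² Σ_{l=1}^{L} (ρ_{l,L}² + ρ_{l−1,L}²)/N_l`, where
`Y_ind = P + Σ_{l=1}^{L−1} a_l* (A_l − B_l)` with `a_l* = ρ_{l,L} σ_L / σ_l`, and where
`A_l`, `B_l`, `P` are sample means of `N_l`, `N_{l+1}`, `N_L` i.i.d. copies of
square-integrable random variables with variances `σ_l²`, `σ_l²`, `σ_L²`, all of the
`2L−1` sample families being mutually independent (no coupling).  Here `W (f, j)` is the
`j`-th sample of family `f`: family `0` is used for `P`, family `l` for `A_l` and family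
`L + l` for `B_l` (`1 ≤ l ≤ L−1`); joint independence of all `W (f, j)` expresses both
within-family i.i.d. sampling and mutual independence of the families. -/
theorem stmt_11
    {Ω : Type} [MeasurableSpace Ω] (μ : Measure Ω) [IsProbabilityMeasure μ]
    (L : ℕ) (hL : 1 ≤ L)
    (σ ρ : ℕ → ℝ)
    (hσpos : ∀ l ∈ Finset.Icc 1 L, 0 < σ l)
    (hρ0 : ρ 0 = 0) (hρL : ρ L = 1)
    (N : ℕ → ℕ)
    (hNnest : ∀ l ∈ Finset.Icc 1 (L - 1), N (l + 1) ≤ N l)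
    (hNLpos : 1 ≤ N L)
    (W : ℕ × ℕ → Ω → ℝ)
    (hmeas : ∀ p, Measurable (W p))
    (hindep : iIndepFun W μ)
    (hident : ∀ f j, IdentDistrib (W (f, j)) (W (f, 0)) μ μ)
    (hL2 : ∀ p, MemLp (W p) 2 μ)
    (hvarP : variance (W (0, 0)) μ = (σ L) ^ 2)
    (hvarA : ∀ l ∈ Finset.Icc 1 (L - 1), variance (W (l, 0)) μ = (σ l) ^ 2)
    (hvarB : ∀ l ∈ Finset.Icc 1 (L - 1), variance (W (L + l, 0)) μ = (σ l) ^ 2) :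
    variance (fun ω => sampleMean (N L) (fun j ω' => W (0, j) ω') ω
        + ∑ l ∈ Finset.Icc 1 (L - 1),
            (ρ l * σ L / σ l) * (sampleMean (N l) (fun j ω' => W (l, j) ω') ω
              - sampleMean (N (l + 1)) (fun j ω' => W (L + l, j) ω') ω)) μ
      = (σ L) ^ 2 * ∑ l ∈ Finset.Icc 1 L, ((ρ l) ^ 2 + (ρ (l - 1)) ^ 2) / N l :=
  stmt_11_general μ L hL σ ρ hσpos hρ0 hρL N W hindep hident hL2 hvarP hvarA hvarB
end

section
/- Optimal sample allocation (Theorem 4): the allocation N_l* = (B / Σ_{j=1}^{L} √(C_j R_j)) · √(R_l / C_l) exhausts the budget, Σ_{l=1}^{L} N_l* C_l = B, and minimizes the variance Σ_{l=1}^{L} R_l / N_l among all positive real allocations satisfying the budget constraint: for all N_1, …, N_L > 0 with Σ_{l=1}^{L} N_l C_l ≤ B, one has Σ_{l=1}^{L} R_l / N_l ≥ Σ_{l=1}^{L} R_l / N_l*. -/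
/-!
Writing `√(C_l R_l) = √(N_l C_l) · √(R_l / N_l)`, Cauchy–Schwarz in Sedrakyan's form gives
`(Σ √(C_l R_l))² ≤ (Σ N_l C_l) · Σ R_l / N_l` for every positive allocation, so an allocation
within the budget `B` has variance at least `(Σ √(C_l R_l))² / B`. The allocation
`N_l* ∝ √(R_l / C_l)` spends exactly `B` and attains this bound.
-/

open Finset

namespace Real

theorem sqrt_div_mul_eq_sqrt_mul {r c : ℝ} (hc : 0 < c) : √(r / c) * c = √(c * r) := by
  rw [← sqrt_sq hc.le, ← sqrt_mul' _ (sq_nonneg c), sqrt_sq hc.le]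
  congr 1
  field_simp

theorem div_sqrt_div_eq_sqrt_mul {r c : ℝ} (hr : 0 ≤ r) (hc : 0 < c) :
    r / √(r / c) = √(c * r) := by
  rcases hr.eq_or_lt with rfl | hr
  · simp
  rw [div_eq_iff (sqrt_pos.2 (div_pos hr hc)).ne', ← sqrt_mul (by positivity),
    show c * r * (r / c) = r * r by field_simp, sqrt_mul_self hr.le]

end Real

section OptimalAllocation

variable {ι : Type*} (s : Finset ι) (R C : ι → ℝ) (B : ℝ)

noncomputable def optimalAllocation (l : ι) : ℝ :=
  B / (∑ j ∈ s, √(C j * R j)) * √(R l / C l)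

variable {s R C}

theorem sum_optimalAllocation_mul (hC : ∀ l ∈ s, 0 < C l) (hS : ∑ j ∈ s, √(C j * R j) ≠ 0) :
    ∑ l ∈ s, optimalAllocation s R C B l * C l = B := by
  simp only [optimalAllocation, mul_assoc]
  rw [← mul_sum, sum_congr rfl fun l hl ↦ Real.sqrt_div_mul_eq_sqrt_mul (hC l hl),
    div_mul_cancel₀ _ hS]

theorem sum_div_optimalAllocation (hR : ∀ l ∈ s, 0 ≤ R l) (hC : ∀ l ∈ s, 0 < C l) :
    ∑ l ∈ s, R l / optimalAllocation s R C B l = (∑ j ∈ s, √(C j * R j)) ^ 2 / B := by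
  have h : ∀ l ∈ s, R l / optimalAllocation s R C B l =
      (∑ j ∈ s, √(C j * R j)) / B * √(C l * R l) := fun l hl ↦ by
    rw [optimalAllocation, div_mul_eq_div_div_swap, div_div_eq_mul_div,
      mul_div_assoc, Real.div_sqrt_div_eq_sqrt_mul (hR l hl) (hC l hl)]
    ring
  rw [sum_congr rfl h, ← mul_sum]
  ring

variable {N : ι → ℝ}

theorem sq_sum_sqrt_mul_div_le_sum_div (hR : ∀ l ∈ s, 0 ≤ R l) (hC : ∀ l ∈ s, 0 < C l)
    (hN : ∀ l ∈ s, 0 < N l) :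
    (∑ l ∈ s, √(C l * R l)) ^ 2 / ∑ l ∈ s, N l * C l ≤ ∑ l ∈ s, R l / N l := by
  refine (sq_sum_div_le_sum_sq_div s _ fun l hl ↦ mul_pos (hN l hl) (hC l hl)).trans_eq
    (sum_congr rfl fun l hl ↦ ?_)
  rw [Real.sq_sqrt (mul_nonneg (hC l hl).le (hR l hl)), mul_comm (N l), mul_div_mul_left _ _ (hC l hl).ne']

end OptimalAllocation

theorem stmt_13_general
    (L : ℕ) (hL : 1 ≤ L)
    (R C : ℕ → ℝ)
    (hR : ∀ l ∈ Finset.Icc 1 L, 0 < R l)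
    (hC : ∀ l ∈ Finset.Icc 1 L, 0 < C l)
    (B : ℝ)
    (Nstar : ℕ → ℝ)
    (hNstar : ∀ l ∈ Finset.Icc 1 L,
      Nstar l = B / (∑ j ∈ Finset.Icc 1 L, Real.sqrt (C j * R j)) * Real.sqrt (R l / C l)) :
    (∑ l ∈ Finset.Icc 1 L, Nstar l * C l = B) ∧
    (∀ N : ℕ → ℝ, (∀ l ∈ Finset.Icc 1 L, 0 < N l) →
      (∑ l ∈ Finset.Icc 1 L, N l * C l ≤ B) →
      ∑ l ∈ Finset.Icc 1 L, R l / Nstar l ≤ ∑ l ∈ Finset.Icc 1 L, R l / N l) := by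
  have hne : (Icc 1 L).Nonempty := nonempty_Icc.2 hL
  have hS : 0 < ∑ j ∈ Icc 1 L, √(C j * R j) :=
    sum_pos (fun l hl ↦ Real.sqrt_pos.2 (mul_pos (hC l hl) (hR l hl))) hne
  have hR' : ∀ l ∈ Icc 1 L, 0 ≤ R l := fun l hl ↦ (hR l hl).le
  refine ⟨?_, fun N hN hbudget ↦ ?_⟩
  · rw [sum_congr rfl fun l hl ↦ by rw [hNstar l hl]]
    exact sum_optimalAllocation_mul B hC hS.ne'
  calc ∑ l ∈ Icc 1 L, R l / Nstar l
      = (∑ j ∈ Icc 1 L, √(C j * R j)) ^ 2 / B := by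
        rw [sum_congr rfl fun l hl ↦ by rw [hNstar l hl]]
        exact sum_div_optimalAllocation B hR' hC
    _ ≤ (∑ j ∈ Icc 1 L, √(C j * R j)) ^ 2 / ∑ l ∈ Icc 1 L, N l * C l :=
        div_le_div_of_nonneg_left (sq_nonneg _)
          (sum_pos (fun l hl ↦ mul_pos (hN l hl) (hC l hl)) hne) hbudget
    _ ≤ ∑ l ∈ Icc 1 L, R l / N l := sq_sum_sqrt_mul_div_le_sum_div hR' hC hN

/-- Theorem 4, optimal sample allocation: the allocation
`N_l* = (B / Σ_{j=1}^{L} √(C_j R_j)) · √(R_l / C_l)` exhausts the budget,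
`Σ_{l=1}^{L} N_l* C_l = B`, and minimizes the variance `Σ_{l=1}^{L} R_l / N_l` among all
positive real allocations satisfying the budget constraint `Σ_{l=1}^{L} N_l C_l ≤ B`. -/
theorem stmt_13
    (L : ℕ) (hL : 1 ≤ L)
    (R C : ℕ → ℝ)
    (hR : ∀ l ∈ Finset.Icc 1 L, 0 < R l)
    (hC : ∀ l ∈ Finset.Icc 1 L, 0 < C l)
    (B : ℝ) (hB : 0 < B)
    (Nstar : ℕ → ℝ)
    (hNstar : ∀ l ∈ Finset.Icc 1 L,
      Nstar l = B / (∑ j ∈ Finset.Icc 1 L, Real.sqrt (C j * R j)) * Real.sqrt (R l / C l)) :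
    (∑ l ∈ Finset.Icc 1 L, Nstar l * C l = B) ∧
    (∀ N : ℕ → ℝ, (∀ l ∈ Finset.Icc 1 L, 0 < N l) →
      (∑ l ∈ Finset.Icc 1 L, N l * C l ≤ B) →
      ∑ l ∈ Finset.Icc 1 L, R l / Nstar l ≤ ∑ l ∈ Finset.Icc 1 L, R l / N l) :=
  stmt_13_general L hL R C hR hC B Nstar hNstar
end
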